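/- Asymptotic efficiency of learned conditional thresholds (Theorem 3, limit part): Assume (A1)–(A4) and fix α ∈ (0,1). Let 𝓧 be a measurable space, ψ : 𝓧 → ℝ measurable, X a random element of 𝓧 defined on a probability space (Ω₂, P₂), and define λ*(x) := F_{ψ(x)}^{-1}(1−α). For each N ∈ ℕ, let λ̂_N : Ω₁ × 𝓧 → [0,1] be jointly measurable, where (Ω₁, P₁) is a probability space carrying the calibration randomness independent of X (expectations are with respect to the product measure P₁ ⊗ P₂). Suppose sup_{x ∈ 𝓧} |λ̂_N(ω₁, x) − λ*(x)| → 0 in P₁-probability as N → ∞. Let λ̄ ∈ [0,1] satisfy E[F_{ψ(X)}(λ̄)] = 1−α. Then lim_{N→∞} E[G_{ψ(X)}(λ̂_N(X))] = E[G_{ψ(X)}(λ*(X))] ≤ E[G_{ψ(X)}(λ̄)]. -/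

import Mathlib

open MeasureTheory Set Filter

open scoped Classical Topology

/-! The inequality is the tangent-line bound for the convex `C_t` at `1 - α`, evaluated at
`F_t(λ̄)` and averaged over `t = ψ(X)`: the slope term `E[∂C_T(1 - α) (F_T(λ̄) - (1 - α))]` is
nonnegative by Chebyshev's correlation inequality, both factors being antitone in `t` by (A2) and
(A4).

For the limit, `G_t = C_t ∘ F_t` on `[0, 1]`, and a convex `[0, 1]`-valued `C_t` is
`2/δ`-Lipschitz on `[δ, 1 - δ]` uniformly in `t`. So `G_t` moves by less than `η` between the
`(1 - α ∓ β)`-quantiles of `F_t`, a window around `λ*(t)` of positive width, measurable in `t`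
because quantiles are monotone in `t`. Hence `G_{ψ(X)}(λ̂_N(X)) → G_{ψ(X)}(λ*(X))` in measure
on the product space, and bounded convergence gives the limit. -/

/-- Generalized inverse `F_t⁻¹(u) := inf {λ ∈ [0,1] : F t λ ≥ u}`, with the
convention that the infimum of the empty set is `1`. -/
noncomputable def genInv (F : ℝ → ℝ → ℝ) (t u : ℝ) : ℝ :=
  if ({l : ℝ | l ∈ Set.Icc (0 : ℝ) 1 ∧ u ≤ F t l}).Nonempty then
    sInf {l : ℝ | l ∈ Set.Icc (0 : ℝ) 1 ∧ u ≤ F t l}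
  else 1

/-- `C_t(u) := G_t(F_t⁻¹(u))`. -/
noncomputable def accFrac (F G : ℝ → ℝ → ℝ) (t u : ℝ) : ℝ :=
  G t (genInv F t u)

section Quantile

variable {F : ℝ → ℝ → ℝ} {t : ℝ}

lemma genInv_mem_Icc (F : ℝ → ℝ → ℝ) (t u : ℝ) : genInv F t u ∈ Icc (0 : ℝ) 1 := by
  rw [genInv]
  split_ifs with h
  · obtain ⟨l, hl⟩ := h
    exact ⟨le_csInf ⟨l, hl⟩ fun x hx => hx.1.1, (csInf_le ⟨0, fun x hx => hx.1.1⟩ hl).trans hl.1.2⟩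
  · exact right_mem_Icc.2 zero_le_one

lemma genInv_apply_self (hF : StrictMonoOn (F t) (Icc 0 1)) {l : ℝ} (hl : l ∈ Icc (0 : ℝ) 1) :
    genInv F t (F t l) = l := by
  have hS : {l' : ℝ | l' ∈ Icc (0 : ℝ) 1 ∧ F t l ≤ F t l'} = Icc l 1 := by
    ext l'
    refine ⟨fun ⟨hl', hle⟩ => ⟨(hF.le_iff_le hl hl').1 hle, hl'.2⟩, fun ⟨h1, h2⟩ => ?_⟩
    have hl' : l' ∈ Icc (0 : ℝ) 1 := ⟨hl.1.trans h1, h2⟩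
    exact ⟨hl', hF.monotoneOn hl hl' h1⟩
  rw [genInv, hS, if_pos (nonempty_Icc.2 hl.2), csInf_Icc hl.2]

lemma apply_genInv (hcont : ContinuousOn (F t) (Icc 0 1)) (hF : StrictMonoOn (F t) (Icc 0 1))
    (hF0 : F t 0 = 0) (hF1 : F t 1 = 1) {u : ℝ} (hu : u ∈ Icc (0 : ℝ) 1) :
    F t (genInv F t u) = u := by
  obtain ⟨l, hl, rfl⟩ := intermediate_value_Icc zero_le_one hcont (hF0 ▸ hF1 ▸ hu)
  rw [genInv_apply_self hF hl]

lemma apply_mem_Icc (hF : StrictMonoOn (F t) (Icc 0 1)) (hF0 : F t 0 = 0) (hF1 : F t 1 = 1)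
    {l : ℝ} (hl : l ∈ Icc (0 : ℝ) 1) : F t l ∈ Icc (0 : ℝ) 1 :=
  ⟨hF0 ▸ hF.monotoneOn (left_mem_Icc.2 zero_le_one) hl hl.1,
    hF1 ▸ hF.monotoneOn hl (right_mem_Icc.2 zero_le_one) hl.2⟩

lemma genInv_strictMonoOn (hcont : ContinuousOn (F t) (Icc 0 1))
    (hF : StrictMonoOn (F t) (Icc 0 1)) (hF0 : F t 0 = 0) (hF1 : F t 1 = 1) :
    StrictMonoOn (genInv F t) (Icc 0 1) := by
  intro u hu v hv huv
  by_contra! h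
  have := hF.monotoneOn (genInv_mem_Icc F t v) (genInv_mem_Icc F t u) h
  rw [apply_genInv hcont hF hF0 hF1 hu, apply_genInv hcont hF hF0 hF1 hv] at this
  exact huv.not_ge this

lemma monotone_genInv (hA2 : ∀ l ∈ Icc (0 : ℝ) 1, Antitone fun t => F t l) (u : ℝ) :
    Monotone fun t => genInv F t u := by
  intro t t' htt'
  have hsub : {l : ℝ | l ∈ Icc (0 : ℝ) 1 ∧ u ≤ F t' l} ⊆ {l : ℝ | l ∈ Icc (0 : ℝ) 1 ∧ u ≤ F t l} :=
    fun l hl => ⟨hl.1, hl.2.trans (hA2 l hl.1 htt')⟩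
  by_cases h' : {l : ℝ | l ∈ Icc (0 : ℝ) 1 ∧ u ≤ F t' l}.Nonempty
  · simp only [genInv, if_pos h', if_pos (h'.mono hsub)]
    exact csInf_le_csInf ⟨0, fun x hx => hx.1.1⟩ h' hsub
  · simpa only [genInv, if_neg h'] using (genInv_mem_Icc F t u).2

end Quantile

section Convex

variable {f : ℝ → ℝ}

lemma ConvexOn.add_deriv_mul_sub_le {S : Set ℝ} (hf : ConvexOn ℝ S f) {x y : ℝ} (hx : x ∈ S)
    (hy : y ∈ S) (hd : DifferentiableAt ℝ f x) : f x + deriv f x * (y - x) ≤ f y := by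
  rcases lt_trichotomy y x with hyx | rfl | hxy
  · have := hf.slope_le_deriv hy hx hyx hd
    rw [slope_def_field, div_le_iff₀ (sub_pos.2 hyx)] at this
    linarith
  · simp
  · have := hf.deriv_le_slope hx hy hxy hd
    rw [slope_def_field, le_div_iff₀ (sub_pos.2 hxy)] at this
    linarith

lemma ConvexOn.lipschitzOnWith_Ioo {a b M δ : ℝ} (hf : ConvexOn ℝ (Ioo a b) f)
    (hM : ∀ x ∈ Ioo a b, |f x| ≤ M) (hδ : 0 < δ) :
    LipschitzOnWith (2 * M / δ).toNNReal f (Ioo (a + δ) (b - δ)) := by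
  have hball : ∀ r, Metric.ball ((a + b) / 2) ((b - a) / 2 - r) = Ioo (a + r) (b - r) := by
    intro r
    rw [Real.ball_eq_Ioo]
    congr 1 <;> ring
  have hball₀ := hball 0
  rw [sub_zero, add_zero, sub_zero] at hball₀
  rw [← hball₀] at hf hM
  rw [← hball]
  exact hf.lipschitzOnWith_of_abs_le hδ hM

end Convex

section Probability

variable {Ω : Type*} [MeasurableSpace Ω] {μ : Measure Ω}

/-- Chebyshev's correlation inequality, from `∫∫ (f x - f y) (g x - g y) d(μ × μ) ≥ 0`. -/
theorem integral_mul_integral_le_integral_mul [IsProbabilityMeasure μ] {f g : Ω → ℝ}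
    (hf : Integrable f μ) (hg : Integrable g μ) (hfg : Integrable (fun ω => f ω * g ω) μ)
    (hmono : Monovary f g) :
    (∫ ω, f ω ∂μ) * (∫ ω, g ω ∂μ) ≤ ∫ ω, f ω * g ω ∂μ := by
  have h11 := hfg.comp_fst μ
  have h22 := hfg.comp_snd μ
  have h12 : Integrable (fun z : Ω × Ω => f z.1 * g z.2) (μ.prod μ) := hf.mul_prod hg
  have h21 : Integrable (fun z : Ω × Ω => f z.2 * g z.1) (μ.prod μ) := by
    simpa only [mul_comm] using hg.mul_prod hf
  have hnonneg : 0 ≤ ∫ z, (f z.1 - f z.2) * (g z.1 - g z.2) ∂(μ.prod μ) :=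
    integral_nonneg fun z => hmono.sub_mul_sub_nonneg z.2 z.1
  have hexpand : ∫ z, (f z.1 - f z.2) * (g z.1 - g z.2) ∂(μ.prod μ) =
      2 * ∫ ω, f ω * g ω ∂μ - 2 * ((∫ ω, f ω ∂μ) * ∫ ω, g ω ∂μ) := by
    have e21 : ∫ z : Ω × Ω, f z.2 * g z.1 ∂(μ.prod μ) = (∫ ω, g ω ∂μ) * ∫ ω, f ω ∂μ := by
      simpa only [mul_comm] using integral_prod_mul (μ := μ) (ν := μ) g f
    have hA : Integrable (fun z : Ω × Ω => f z.1 * g z.1 - f z.1 * g z.2) (μ.prod μ) :=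
      h11.sub h12
    have hB : Integrable (fun z : Ω × Ω => f z.2 * g z.1 - f z.2 * g z.2) (μ.prod μ) :=
      h21.sub h22
    simp_rw [sub_mul, mul_sub]
    rw [integral_sub hA hB, integral_sub h11 h12, integral_sub h21 h22,
      integral_fun_fst (fun ω => f ω * g ω), integral_fun_snd (fun ω => f ω * g ω),
      integral_prod_mul f g, e21]
    simp only [probReal_univ, one_smul]
    ring
  linarith

theorem tendsto_integral_of_tendstoInMeasure_of_abs_le [IsFiniteMeasure μ] {f : ℕ → Ω → ℝ}
    {g : Ω → ℝ} {M : ℝ} (hf : ∀ n, AEStronglyMeasurable (f n) μ) (hg : Integrable g μ)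
    (hfM : ∀ n ω, |f n ω| ≤ M) (hfg : TendstoInMeasure μ f atTop g) :
    Tendsto (fun n => ∫ ω, f n ω ∂μ) atTop (𝓝 (∫ ω, g ω ∂μ)) := by
  have hui : UnifIntegrable f 1 μ := by
    refine unifIntegrable_of le_rfl ENNReal.one_ne_top hf fun ε _ => ⟨M.toNNReal + 1, fun n => ?_⟩
    have hempty : {ω | M.toNNReal + 1 ≤ ‖f n ω‖₊} = ∅ := by
      refine eq_empty_of_forall_notMem fun ω hω => ?_
      have hω' : (M.toNNReal : ℝ) + 1 ≤ ‖f n ω‖ := by exact_mod_cast hω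
      linarith [hfM n ω, Real.le_coe_toNNReal M, Real.norm_eq_abs (f n ω)]
    simp [hempty]
  refine tendsto_integral_of_L1' g hg.1
    (Eventually.of_forall fun n => Integrable.of_bound (hf n) M (ae_of_all _ (hfM n))) ?_
  exact tendsto_Lp_finite_of_tendstoInMeasure le_rfl ENNReal.one_ne_top hf
    (memLp_one_iff_integrable.2 hg) hui hfg

lemma tendsto_measure_setOf_lt_nhdsGT_zero [IsFiniteMeasure μ] {w : Ω → ℝ} (hw : Measurable w)
    (hw_pos : ∀ ω, 0 < w ω) : Tendsto (fun ε => μ {ω | w ω < ε}) (𝓝[>] 0) (𝓝 0) := by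
  have h := tendsto_measure_biInter_gt (μ := μ) (s := fun ε => {ω | w ω < ε}) (a := (0 : ℝ))
    (fun r _ => (measurableSet_lt hw measurable_const).nullMeasurableSet)
    (fun i j _ hij ω hω => lt_of_lt_of_le hω hij) ⟨1, one_pos, measure_ne_top _ _⟩
  have hempty : ⋂ r > (0 : ℝ), {ω | w ω < r} = ∅ :=
    eq_empty_of_forall_notMem fun ω hω => lt_irrefl (w ω) (mem_iInter₂.1 hω (w ω) (hw_pos ω))
  rwa [hempty, measure_empty] at h

end Probability

section UniformInMeasure

variable {Ω β γ : Type*} [MeasurableSpace Ω] {μ : Measure Ω}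

/-- `sup_x |Y N (ω, x) - Ylim x| → 0` in `μ`-probability, phrased with `∃ x` so that no
measurability of the supremum is needed. -/
def TendstoUniformlyInMeasure (μ : Measure Ω) (Y : ℕ → Ω × β → ℝ) (Ylim : β → ℝ) : Prop :=
  ∀ ε > (0 : ℝ), Tendsto (fun N => μ {ω | ∃ x, ε < |Y N (ω, x) - Ylim x|}) atTop (𝓝 0)

variable {Y : ℕ → Ω × β → ℝ} {Ylim : β → ℝ}

lemma TendstoUniformlyInMeasure.comp_right (h : TendstoUniformlyInMeasure μ Y Ylim) (X : γ → β) :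
    TendstoUniformlyInMeasure μ (fun N p => Y N (p.1, X p.2)) (Ylim ∘ X) := fun ε hε =>
  tendsto_of_tendsto_of_tendsto_of_le_of_le tendsto_const_nhds (h ε hε) (fun _ => zero_le)
    fun _ => measure_mono fun _ ⟨z, hz⟩ => ⟨X z, hz⟩

theorem TendstoUniformlyInMeasure.tendstoInMeasure_prod [MeasurableSpace β] {ν : Measure β}
    [IsProbabilityMeasure μ] [IsProbabilityMeasure ν] (hY : TendstoUniformlyInMeasure μ Y Ylim)
    {S : Set ℝ} (hYS : ∀ N p, Y N p ∈ S) {g : β → ℝ → ℝ}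
    (hg : ∀ η > (0 : ℝ), ∃ w : β → ℝ, Measurable w ∧ (∀ x, 0 < w x) ∧
      ∀ x, ∀ l ∈ S, |l - Ylim x| ≤ w x → |g x l - g x (Ylim x)| < η) :
    TendstoInMeasure (μ.prod ν) (fun N p => g p.2 (Y N p)) atTop (fun p => g p.2 (Ylim p.2)) := by
  rw [tendstoInMeasure_iff_dist]
  intro η hη
  obtain ⟨w, hw, hw_pos, hgw⟩ := hg η hη
  rw [ENNReal.tendsto_nhds_zero]
  intro e he
  have he2 : 0 < e / 2 := ENNReal.half_pos he.ne'
  obtain ⟨ε, hνε, hε⟩ := ((ENNReal.tendsto_nhds_zero.1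
    (tendsto_measure_setOf_lt_nhdsGT_zero (μ := ν) hw hw_pos) _ he2).and self_mem_nhdsWithin).exists
  filter_upwards [ENNReal.tendsto_nhds_zero.1 (hY ε hε) _ he2] with N hμN
  have hsub : {p : Ω × β | η ≤ dist (g p.2 (Y N p)) (g p.2 (Ylim p.2))} ⊆
      {ω | ∃ x, ε < |Y N (ω, x) - Ylim x|} ×ˢ univ ∪ univ ×ˢ {x | w x < ε} := by
    intro p hp
    by_contra hout
    simp only [mem_union, mem_prod, mem_ofPred_eq, mem_univ, and_true, true_and, not_or,
      not_exists, not_lt] at hout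
    exact (hgw p.2 _ (hYS N p) ((hout.1 p.2).trans hout.2)).not_ge hp
  calc (μ.prod ν) {p | η ≤ dist (g p.2 (Y N p)) (g p.2 (Ylim p.2))}
      ≤ μ {ω | ∃ x, ε < |Y N (ω, x) - Ylim x|} + ν {x | w x < ε} := by
        refine (measure_mono hsub).trans ((measure_union_le _ _).trans ?_)
        simp only [Measure.prod_prod, measure_univ, mul_one, one_mul, le_refl]
    _ ≤ e / 2 + e / 2 := add_le_add hμN hνε
    _ = e := ENNReal.add_halves e

end UniformInMeasure

section AcceptanceFraction

variable {F G : ℝ → ℝ → ℝ} {t : ℝ}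

lemma lipschitzOnWith_accFrac (hC : ConvexOn ℝ (Icc 0 1) (accFrac F G t))
    (hG : ∀ l ∈ Icc (0 : ℝ) 1, G t l ∈ Icc (0 : ℝ) 1) {δ : ℝ} (hδ : 0 < δ) :
    LipschitzOnWith (2 / δ).toNNReal (accFrac F G t) (Ioo δ (1 - δ)) := by
  have hbound : ∀ u ∈ Ioo (0 : ℝ) 1, |accFrac F G t u| ≤ 1 := fun u _ =>
    have h : accFrac F G t u ∈ Icc (0 : ℝ) 1 := hG _ (genInv_mem_Icc F t u)
    (abs_of_nonneg h.1).trans_le h.2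
  simpa using (hC.subset Ioo_subset_Icc_self (convex_Ioo 0 1)).lipschitzOnWith_Ioo hbound hδ

lemma abs_deriv_accFrac_le (hC : ConvexOn ℝ (Icc 0 1) (accFrac F G t))
    (hG : ∀ l ∈ Icc (0 : ℝ) 1, G t l ∈ Icc (0 : ℝ) 1) {δ u : ℝ} (hδ : 0 < δ)
    (hu : u ∈ Ioo δ (1 - δ)) : |deriv (accFrac F G t) u| ≤ 2 / δ := by
  have h := norm_deriv_le_of_lipschitzOn (Ioo_mem_nhds hu.1 hu.2) (lipschitzOnWith_accFrac hC hG hδ)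
  rwa [Real.norm_eq_abs, Real.coe_toNNReal _ (by positivity)] at h

noncomputable def quantileBandWidth (F : ℝ → ℝ → ℝ) (u β t : ℝ) : ℝ :=
  min (genInv F t u - genInv F t (u - β)) (genInv F t (u + β) - genInv F t u)

lemma measurable_quantileBandWidth (hA2 : ∀ l ∈ Icc (0 : ℝ) 1, Antitone fun t => F t l)
    (u β : ℝ) : Measurable (quantileBandWidth F u β) :=
  ((monotone_genInv hA2 u).measurable.sub (monotone_genInv hA2 _).measurable).min
    ((monotone_genInv hA2 _).measurable.sub (monotone_genInv hA2 u).measurable)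

lemma quantileBandWidth_pos (hcont : ContinuousOn (F t) (Icc 0 1))
    (hF : StrictMonoOn (F t) (Icc 0 1)) (hF0 : F t 0 = 0) (hF1 : F t 1 = 1) {u β : ℝ}
    (hβ : 0 < β) (hlo : 0 ≤ u - β) (hhi : u + β ≤ 1) : 0 < quantileBandWidth F u β t := by
  have hmono := genInv_strictMonoOn hcont hF hF0 hF1
  have hu : u ∈ Icc (0 : ℝ) 1 := ⟨by linarith, by linarith⟩
  exact lt_min (sub_pos.2 (hmono ⟨hlo, by linarith⟩ hu (by linarith)))
    (sub_pos.2 (hmono hu ⟨by linarith, hhi⟩ (by linarith)))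

lemma abs_sub_le_of_abs_sub_le_quantileBandWidth (hcont : ContinuousOn (F t) (Icc 0 1))
    (hF : StrictMonoOn (F t) (Icc 0 1)) (hF0 : F t 0 = 0) (hF1 : F t 1 = 1)
    (hC : ConvexOn ℝ (Icc 0 1) (accFrac F G t)) (hG : ∀ l ∈ Icc (0 : ℝ) 1, G t l ∈ Icc (0 : ℝ) 1)
    {u β δ : ℝ} (hδ : 0 < δ) (hβ : 0 ≤ β) (hlo : δ < u - β) (hhi : u + β < 1 - δ) {l : ℝ}
    (hl : l ∈ Icc (0 : ℝ) 1) (hlw : |l - genInv F t u| ≤ quantileBandWidth F u β t) :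
    |G t l - G t (genInv F t u)| ≤ 2 / δ * β := by
  unfold quantileBandWidth at hlw
  have hqlo : genInv F t (u - β) ≤ l := by
    linarith [(abs_le.1 (hlw.trans (min_le_left _ _))).1]
  have hqhi : l ≤ genInv F t (u + β) := by
    linarith [(abs_le.1 (hlw.trans (min_le_right _ _))).2]
  have hFlo : u - β ≤ F t l := by
    have h := hF.monotoneOn (genInv_mem_Icc F t _) hl hqlo
    rwa [apply_genInv hcont hF hF0 hF1 ⟨by linarith, by linarith⟩] at h
  have hFhi : F t l ≤ u + β := by
    have h := hF.monotoneOn hl (genInv_mem_Icc F t _) hqhi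
    rwa [apply_genInv hcont hF hF0 hF1 ⟨by linarith, by linarith⟩] at h
  have hGl : G t l = accFrac F G t (F t l) := by rw [accFrac, genInv_apply_self hF hl]
  have hlip := (lipschitzOnWith_accFrac hC hG hδ).dist_le_mul (F t l)
    ⟨by linarith, by linarith⟩ u ⟨by linarith, by linarith⟩
  rw [Real.coe_toNNReal _ (by positivity), Real.dist_eq, Real.dist_eq] at hlip
  rw [hGl]
  calc |accFrac F G t (F t l) - accFrac F G t u| ≤ 2 / δ * |F t l - u| := hlip
    _ ≤ 2 / δ * β := by gcongr; exact abs_le.2 ⟨by linarith, by linarith⟩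

end AcceptanceFraction

section Efficiency

variable {F G : ℝ → ℝ → ℝ}

lemma exists_measurable_modulus_G_genInv
    (hA1 : ∀ t : ℝ, ContinuousOn (F t) (Icc 0 1) ∧ StrictMonoOn (F t) (Icc 0 1) ∧
      F t 0 = 0 ∧ F t 1 = 1)
    (hA2 : ∀ l ∈ Icc (0 : ℝ) 1, Antitone fun t => F t l)
    (hC : ∀ t : ℝ, ConvexOn ℝ (Icc 0 1) (accFrac F G t))
    (hG : ∀ t : ℝ, ∀ l ∈ Icc (0 : ℝ) 1, G t l ∈ Icc (0 : ℝ) 1)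
    {u : ℝ} (hu : u ∈ Ioo (0 : ℝ) 1) {η : ℝ} (hη : 0 < η) :
    ∃ w : ℝ → ℝ, Measurable w ∧ (∀ t, 0 < w t) ∧
      ∀ t, ∀ l ∈ Icc (0 : ℝ) 1, |l - genInv F t u| ≤ w t → |G t l - G t (genInv F t u)| < η := by
  obtain ⟨δ, hδ, hδu, hδu'⟩ : ∃ δ > 0, 2 * δ ≤ u ∧ 2 * δ ≤ 1 - u :=
    ⟨min u (1 - u) / 2, half_pos (lt_min hu.1 (sub_pos.2 hu.2)),
      by linarith [min_le_left u (1 - u)], by linarith [min_le_right u (1 - u)]⟩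
  set β := min (δ / 2) (η * δ / 4)
  have hβ : 0 < β := lt_min (by positivity) (by positivity)
  have hβδ : β ≤ δ / 2 := min_le_left _ _
  have hβη : β ≤ η * δ / 4 := min_le_right _ _
  refine ⟨quantileBandWidth F u β, measurable_quantileBandWidth hA2 u β, fun t => ?_,
    fun t l hl hlw => ?_⟩
  · obtain ⟨hcont, hF, hF0, hF1⟩ := hA1 t
    exact quantileBandWidth_pos hcont hF hF0 hF1 hβ (by linarith) (by linarith)
  · obtain ⟨hcont, hF, hF0, hF1⟩ := hA1 t
    calc |G t l - G t (genInv F t u)| ≤ 2 / δ * β :=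
          abs_sub_le_of_abs_sub_le_quantileBandWidth hcont hF hF0 hF1 (hC t) (hG t) hδ hβ.le
            (by linarith) (by linarith) hl hlw
      _ ≤ 2 / δ * (η * δ / 4) := by gcongr
      _ = η / 2 := by field_simp; ring
      _ < η := by linarith

lemma G_genInv_add_deriv_mul_le {t : ℝ} (hF : StrictMonoOn (F t) (Icc 0 1)) (hF0 : F t 0 = 0)
    (hF1 : F t 1 = 1) (hC : ConvexOn ℝ (Icc 0 1) (accFrac F G t)) {u l : ℝ}
    (hu : u ∈ Icc (0 : ℝ) 1) (hd : DifferentiableAt ℝ (accFrac F G t) u)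
    (hl : l ∈ Icc (0 : ℝ) 1) :
    G t (genInv F t u) + deriv (accFrac F G t) u * (F t l - u) ≤ G t l :=
  calc G t (genInv F t u) + deriv (accFrac F G t) u * (F t l - u)
      = accFrac F G t u + deriv (accFrac F G t) u * (F t l - u) := rfl
    _ ≤ accFrac F G t (F t l) := hC.add_deriv_mul_sub_le hu (apply_mem_Icc hF hF0 hF1 hl) hd
    _ = G t l := by rw [accFrac, genInv_apply_self hF hl]

theorem integral_G_genInv_le_integral_G {Ω : Type*} [MeasurableSpace Ω] {P : Measure Ω}
    [IsProbabilityMeasure P] {T : Ω → ℝ} (hT : Measurable T)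
    (hA1 : ∀ t : ℝ, ContinuousOn (F t) (Icc 0 1) ∧ StrictMonoOn (F t) (Icc 0 1) ∧
      F t 0 = 0 ∧ F t 1 = 1)
    (hA2 : ∀ l ∈ Icc (0 : ℝ) 1, Antitone fun t => F t l)
    (hA3 : ∀ t : ℝ, ConvexOn ℝ (Icc 0 1) (accFrac F G t) ∧
      ∀ u ∈ Ioo (0 : ℝ) 1, DifferentiableAt ℝ (accFrac F G t) u)
    (hA4 : ∀ u ∈ Ioo (0 : ℝ) 1, Antitone fun t => deriv (accFrac F G t) u)
    (hG : ∀ t : ℝ, ∀ l ∈ Icc (0 : ℝ) 1, G t l ∈ Icc (0 : ℝ) 1)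
    {u : ℝ} (hu : u ∈ Ioo (0 : ℝ) 1) {lamBar : ℝ} (hlamBar : lamBar ∈ Icc (0 : ℝ) 1)
    (hmean : ∫ ω, F (T ω) lamBar ∂P = u)
    (hintStar : Integrable (fun ω => G (T ω) (genInv F (T ω) u)) P)
    (hintBar : Integrable (fun ω => G (T ω) lamBar) P) :
    ∫ ω, G (T ω) (genInv F (T ω) u) ∂P ≤ ∫ ω, G (T ω) lamBar ∂P := by
  set c : ℝ → ℝ := fun t => deriv (accFrac F G t) u
  set b : ℝ → ℝ := fun t => F t lamBar - u
  have hc : Antitone c := hA4 u hu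
  have hb : Antitone b := fun _ _ h => sub_le_sub_right (hA2 lamBar hlamBar h) u
  obtain ⟨δ, hδ, huδ⟩ : ∃ δ > 0, u ∈ Ioo δ (1 - δ) :=
    ⟨min u (1 - u) / 2, half_pos (lt_min hu.1 (sub_pos.2 hu.2)),
      by linarith [min_le_left u (1 - u), hu.1], by linarith [min_le_right u (1 - u), hu.2]⟩
  have hc_bound : ∀ ω, ‖c (T ω)‖ ≤ 2 / δ := fun ω =>
    abs_deriv_accFrac_le (hA3 (T ω)).1 (hG (T ω)) hδ huδ
  have hFT : Integrable (fun ω => F (T ω) lamBar) P := by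
    refine .of_bound ((hA2 lamBar hlamBar).measurable.comp hT).aestronglyMeasurable 1
      (ae_of_all _ fun ω => ?_)
    obtain ⟨-, hF, hF0, hF1⟩ := hA1 (T ω)
    have h := apply_mem_Icc hF hF0 hF1 hlamBar
    exact (abs_of_nonneg h.1).trans_le h.2
  have hcT : Integrable (fun ω => c (T ω)) P :=
    .of_bound (hc.measurable.comp hT).aestronglyMeasurable _ (ae_of_all _ hc_bound)
  have hbT : Integrable (fun ω => b (T ω)) P := hFT.sub (integrable_const u)
  have hcbT : Integrable (fun ω => c (T ω) * b (T ω)) P :=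
    hbT.bdd_mul (hc.measurable.comp hT).aestronglyMeasurable (ae_of_all _ hc_bound)
  have hslope : 0 ≤ ∫ ω, c (T ω) * b (T ω) ∂P := by
    have h := integral_mul_integral_le_integral_mul hcT hbT hcbT ((hc.monovary hb).comp_right T)
    rwa [integral_sub hFT (integrable_const u), hmean, integral_const, probReal_univ, one_smul,
      sub_self, mul_zero] at h
  calc ∫ ω, G (T ω) (genInv F (T ω) u) ∂P
      ≤ ∫ ω, G (T ω) (genInv F (T ω) u) ∂P + ∫ ω, c (T ω) * b (T ω) ∂P :=
        le_add_of_nonneg_right hslope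
    _ = ∫ ω, (G (T ω) (genInv F (T ω) u) + c (T ω) * b (T ω)) ∂P :=
        (integral_add hintStar hcbT).symm
    _ ≤ ∫ ω, G (T ω) lamBar ∂P := integral_mono (hintStar.add hcbT) hintBar fun ω => by
        obtain ⟨-, hF, hF0, hF1⟩ := hA1 (T ω)
        exact G_genInv_add_deriv_mul_le hF hF0 hF1 (hA3 (T ω)).1 ⟨hu.1.le, hu.2.le⟩
          ((hA3 (T ω)).2 u hu) hlamBar

end Efficiency

theorem learned_threshold_asymptotic_efficiency_general
    {𝓧 : Type*} [MeasurableSpace 𝓧]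
    {Ω₁ Ω₂ : Type*} [MeasurableSpace Ω₁] [MeasurableSpace Ω₂]
    (P₁ : Measure Ω₁) [IsProbabilityMeasure P₁]
    (P₂ : Measure Ω₂) [IsProbabilityMeasure P₂]
    (F G : ℝ → ℝ → ℝ)
    (hGrange : ∀ t : ℝ, ∀ l ∈ Icc (0 : ℝ) 1, G t l ∈ Icc (0 : ℝ) 1)
    -- (A1)
    (hA1 : ∀ t : ℝ, ContinuousOn (F t) (Icc 0 1) ∧ StrictMonoOn (F t) (Icc 0 1) ∧
      F t 0 = 0 ∧ F t 1 = 1)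
    -- (A2)
    (hA2 : ∀ l ∈ Icc (0 : ℝ) 1, Antitone fun t => F t l)
    -- (A3)
    (hA3 : ∀ t : ℝ, ConvexOn ℝ (Icc 0 1) (accFrac F G t) ∧
      ∀ u ∈ Ioo (0 : ℝ) 1, DifferentiableAt ℝ (accFrac F G t) u)
    -- (A4)
    (hA4 : ∀ u ∈ Ioo (0 : ℝ) 1, Antitone fun t => deriv (accFrac F G t) u)
    (α : ℝ) (hα : α ∈ Ioo (0 : ℝ) 1)
    (ψ : 𝓧 → ℝ) (hψ : Measurable ψ)
    (X : Ω₂ → 𝓧) (hX : Measurable X)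
    (lamHat : ℕ → Ω₁ × 𝓧 → ℝ)
    (hlamHatRange : ∀ N p, lamHat N p ∈ Icc (0 : ℝ) 1)
    -- uniform (over x) convergence in P₁-probability to the oracle threshold
    (hconv : ∀ ε > (0 : ℝ),
      Tendsto (fun N => P₁ {ω₁ | ∃ x : 𝓧, ε < |lamHat N (ω₁, x) - genInv F (ψ x) (1 - α)|})
        atTop (𝓝 0))
    (lamBar : ℝ) (hlamBar : lamBar ∈ Icc (0 : ℝ) 1)
    (hmean : ∫ ω₂, F (ψ (X ω₂)) lamBar ∂P₂ = 1 - α)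
    (hintN : ∀ N, Integrable (fun p : Ω₁ × Ω₂ =>
      G (ψ (X p.2)) (lamHat N (p.1, X p.2))) (P₁.prod P₂))
    (hintStar : Integrable (fun ω₂ => G (ψ (X ω₂)) (genInv F (ψ (X ω₂)) (1 - α))) P₂)
    (hintBar : Integrable (fun ω₂ => G (ψ (X ω₂)) lamBar) P₂) :
    Tendsto (fun N => ∫ p, G (ψ (X p.2)) (lamHat N (p.1, X p.2)) ∂(P₁.prod P₂)) atTop
        (𝓝 (∫ ω₂, G (ψ (X ω₂)) (genInv F (ψ (X ω₂)) (1 - α)) ∂P₂)) ∧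
      ∫ ω₂, G (ψ (X ω₂)) (genInv F (ψ (X ω₂)) (1 - α)) ∂P₂ ≤
        ∫ ω₂, G (ψ (X ω₂)) lamBar ∂P₂ := by
  have hu : 1 - α ∈ Ioo (0 : ℝ) 1 := ⟨by linarith [hα.2], by linarith [hα.1]⟩
  have hT : Measurable fun ω₂ => ψ (X ω₂) := hψ.comp hX
  refine ⟨?_, integral_G_genInv_le_integral_G hT hA1 hA2 hA3 hA4 hGrange hu hlamBar hmean
    hintStar hintBar⟩
  have hconvX : TendstoUniformlyInMeasure P₁ (fun N p => lamHat N (p.1, X p.2))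
      fun ω₂ => genInv F (ψ (X ω₂)) (1 - α) :=
    TendstoUniformlyInMeasure.comp_right (Ylim := fun x => genInv F (ψ x) (1 - α)) hconv X
  have hmeas : TendstoInMeasure (P₁.prod P₂)
      (fun N p => G (ψ (X p.2)) (lamHat N (p.1, X p.2))) atTop
      (fun p => G (ψ (X p.2)) (genInv F (ψ (X p.2)) (1 - α))) := by
    refine hconvX.tendstoInMeasure_prod (g := fun ω₂ => G (ψ (X ω₂)))
      (fun N p => hlamHatRange N _) fun η hη => ?_
    obtain ⟨w, hw, hw_pos, hwG⟩ := exists_measurable_modulus_G_genInv hA1 hA2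
      (fun t => (hA3 t).1) hGrange hu hη
    exact ⟨fun ω₂ => w (ψ (X ω₂)), hw.comp hT, fun _ => hw_pos _, fun _ => hwG _⟩
  have hbound : ∀ N (p : Ω₁ × Ω₂), |G (ψ (X p.2)) (lamHat N (p.1, X p.2))| ≤ 1 := fun N p =>
    have h := hGrange _ _ (hlamHatRange N (p.1, X p.2))
    (abs_of_nonneg h.1).trans_le h.2
  have hlim := tendsto_integral_of_tendstoInMeasure_of_abs_le (fun N => (hintN N).1)
    (hintStar.comp_snd P₁) hbound hmeas
  rwa [integral_fun_snd fun ω₂ => G (ψ (X ω₂)) (genInv F (ψ (X ω₂)) (1 - α)), probReal_univ,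
    one_smul] at hlim

/-- **Asymptotic efficiency of learned conditional thresholds (Theorem 3, limit part).**
If the learned thresholds `λ̂_N` converge uniformly in probability to the oracle threshold
`λ*(x) = F_{ψ(x)}⁻¹(1-α)`, then the expected acceptance fraction of `λ̂_N` converges to that
of `λ*`, which is at most that of any marginal threshold `λ̄` with `E[F_{ψ(X)}(λ̄)] = 1-α`. -/
theorem learned_threshold_asymptotic_efficiency
    {𝓧 : Type*} [MeasurableSpace 𝓧]
    {Ω₁ Ω₂ : Type*} [MeasurableSpace Ω₁] [MeasurableSpace Ω₂]
    (P₁ : Measure Ω₁) [IsProbabilityMeasure P₁]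
    (P₂ : Measure Ω₂) [IsProbabilityMeasure P₂]
    (F G : ℝ → ℝ → ℝ)
    (hFrange : ∀ t : ℝ, ∀ l ∈ Icc (0 : ℝ) 1, F t l ∈ Icc (0 : ℝ) 1)
    (hGrange : ∀ t : ℝ, ∀ l ∈ Icc (0 : ℝ) 1, G t l ∈ Icc (0 : ℝ) 1)
    -- (A1)
    (hA1 : ∀ t : ℝ, ContinuousOn (F t) (Icc 0 1) ∧ StrictMonoOn (F t) (Icc 0 1) ∧
      F t 0 = 0 ∧ F t 1 = 1)
    -- (A2)
    (hA2 : ∀ l ∈ Icc (0 : ℝ) 1, Antitone fun t => F t l)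
    -- (A3)
    (hA3 : ∀ t : ℝ, ConvexOn ℝ (Icc 0 1) (accFrac F G t) ∧
      ∀ u ∈ Ioo (0 : ℝ) 1, DifferentiableAt ℝ (accFrac F G t) u)
    -- (A4)
    (hA4 : ∀ u ∈ Ioo (0 : ℝ) 1, Antitone fun t => deriv (accFrac F G t) u)
    (α : ℝ) (hα : α ∈ Ioo (0 : ℝ) 1)
    (ψ : 𝓧 → ℝ) (hψ : Measurable ψ)
    (X : Ω₂ → 𝓧) (hX : Measurable X)
    (lamHat : ℕ → Ω₁ × 𝓧 → ℝ)
    (hlamHatMeas : ∀ N, Measurable (lamHat N))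
    (hlamHatRange : ∀ N p, lamHat N p ∈ Icc (0 : ℝ) 1)
    -- uniform (over x) convergence in P₁-probability to the oracle threshold
    (hconv : ∀ ε > (0 : ℝ),
      Tendsto (fun N => P₁ {ω₁ | ∃ x : 𝓧, ε < |lamHat N (ω₁, x) - genInv F (ψ x) (1 - α)|})
        atTop (𝓝 0))
    (lamBar : ℝ) (hlamBar : lamBar ∈ Icc (0 : ℝ) 1)
    (hmean : ∫ ω₂, F (ψ (X ω₂)) lamBar ∂P₂ = 1 - α)
    (hint0 : Integrable (fun ω₂ => F (ψ (X ω₂)) lamBar) P₂)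
    (hintN : ∀ N, Integrable (fun p : Ω₁ × Ω₂ =>
      G (ψ (X p.2)) (lamHat N (p.1, X p.2))) (P₁.prod P₂))
    (hintStar : Integrable (fun ω₂ => G (ψ (X ω₂)) (genInv F (ψ (X ω₂)) (1 - α))) P₂)
    (hintBar : Integrable (fun ω₂ => G (ψ (X ω₂)) lamBar) P₂) :
    Tendsto (fun N => ∫ p, G (ψ (X p.2)) (lamHat N (p.1, X p.2)) ∂(P₁.prod P₂)) atTop
        (𝓝 (∫ ω₂, G (ψ (X ω₂)) (genInv F (ψ (X ω₂)) (1 - α)) ∂P₂)) ∧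
      ∫ ω₂, G (ψ (X ω₂)) (genInv F (ψ (X ω₂)) (1 - α)) ∂P₂ ≤
        ∫ ω₂, G (ψ (X ω₂)) lamBar ∂P₂ :=
  learned_threshold_asymptotic_efficiency_general P₁ P₂ F G hGrange hA1 hA2 hA3 hA4 α hα ψ hψ X hX
    lamHat hlamHatRange hconv lamBar hlamBar hmean hintN hintStar hintBar
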